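/- The minimal order of an (m+1)-colored rooted tree with doubling index 𝔡(τ)=k is 2^{k−1} − 1/2, and the minimal trees satisfy the recursion 𝒯_{𝔡,k} = {[τ₁,τ₂]_l : τ₁,τ₂ ∈ 𝒯_{𝔡,k−1}, l ≥ 1}, with ρ_{𝔡,k} = 2ρ_{𝔡,k−1} + 1/2. -/

import Mathlib

inductive CTree (m : ℕ) : Type
  | node : Fin (m + 1) → List (CTree m) → CTree m

namespace CTree

variable {m : ℕ}

def rho : CTree m → ℚ
  | .node l ts => (if (l : ℕ) = 0 then 1 else 1/2) + (ts.attach.map (fun t => rho t.1)).sum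
decreasing_by
  all_goals try simp only [CTree.node.sizeOf_spec, List.cons.sizeOf_spec, List.nil.sizeOf_spec]
  all_goals try have := List.sizeOf_lt_of_mem t.2
  all_goals omega

def height : CTree m → ℕ
  | .node _ ts => 1 + (ts.attach.map (fun t => height t.1)).foldr max 0
decreasing_by
  all_goals try simp only [CTree.node.sizeOf_spec, List.cons.sizeOf_spec, List.nil.sizeOf_spec]
  all_goals try have := List.sizeOf_lt_of_mem t.2
  all_goals omega

def ram : CTree m → ℕ
  | .node _ [] => 1
  | .node _ [t] => ram t
  | .node _ ts => 1 + (ts.attach.map (fun t => ram t.1)).foldr max 0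
decreasing_by
  all_goals try simp only [CTree.node.sizeOf_spec, List.cons.sizeOf_spec, List.nil.sizeOf_spec]
  all_goals try have := List.sizeOf_lt_of_mem t.2
  all_goals omega

def dbl : CTree m → ℕ
  | .node _ [] => 1
  | .node _ ts =>
      let ds := ts.attach.map (fun t => dbl t.1)
      let M := ds.foldr max 0
      if 2 ≤ ds.count M then M + 1 else M
decreasing_by
  all_goals try simp only [CTree.node.sizeOf_spec, List.cons.sizeOf_spec, List.nil.sizeOf_spec]
  all_goals try have := List.sizeOf_lt_of_mem t.2
  all_goals omega


end CTree

/-!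
Every tree satisfies `2 ^ 𝔡(τ) ≤ 2 ρ(τ) + 1`, by induction on the tree: either some child has
the same doubling index as the root, and the root adds weight at least `1/2` to it, or two
children have index `𝔡(τ) - 1` and their bounds add up. Perfect binary trees with stochastic
labels attain the bound, so the minimal trees of index `k` are exactly the tight ones and have
`ρ = 2 ^ (k - 1) - 1/2`. In a tight tree of index `k ≥ 2` the first case cannot occur, and in the
second every slack term vanishes: the root is stochastic, there are no other children, and both
children are tight of index `k - 1`.
-/

theorem List.foldr_max_zero_mem {l : List ℕ} (hl : l ≠ []) : l.foldr max 0 ∈ l :=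
  List.maximum_mem (List.foldr_max_of_ne_nil hl).symm

namespace CTree

variable {m : ℕ}

@[elab_as_elim]
theorem induction {motive : CTree m → Prop}
    (node : ∀ l ts, (∀ t ∈ ts, motive t) → motive (.node l ts)) : ∀ τ, motive τ
  | .node l ts => node l ts fun t _ => induction node t

def rootWeight (l : Fin (m + 1)) : ℚ := if (l : ℕ) = 0 then 1 else 1/2

lemma half_le_rootWeight (l : Fin (m + 1)) : 1/2 ≤ rootWeight l := by
  unfold rootWeight
  split_ifs <;> norm_num

lemma rootWeight_eq_half_iff {l : Fin (m + 1)} : rootWeight l = 1/2 ↔ 1 ≤ (l : ℕ) := by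
  unfold rootWeight
  split_ifs with h
  · norm_num [h]
  · norm_num; omega

lemma rho_node (l : Fin (m + 1)) (ts : List (CTree m)) :
    rho (node l ts) = rootWeight l + (ts.map rho).sum := by
  rw [rho, List.attach_map_val, rootWeight]

lemma half_le_rho (τ : CTree m) : 1/2 ≤ rho τ := by
  induction τ using CTree.induction with
  | node l ts ih =>
    have hsum : 0 ≤ (ts.map rho).sum :=
      List.sum_nonneg (by simpa using fun t ht => one_half_pos.le.trans (ih t ht))
    rw [rho_node]
    linarith [half_le_rootWeight l]

lemma rho_pos (τ : CTree m) : 0 < rho τ := one_half_pos.trans_le (half_le_rho τ)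

lemma sum_map_rho_pos {ts : List (CTree m)} (hts : ts ≠ []) : 0 < (ts.map rho).sum :=
  List.sum_pos _ (by simpa using fun t _ => rho_pos t) (by simpa)

lemma sum_map_rho_nonneg (ts : List (CTree m)) : 0 ≤ (ts.map rho).sum :=
  List.sum_nonneg (by simpa using fun t _ => (rho_pos t).le)

lemma rho_add_half_le_rho_node (l : Fin (m + 1)) {ts : List (CTree m)} {c : CTree m}
    (hc : c ∈ ts) : rho c + 1/2 ≤ rho (node l ts) := by
  have : rho c ≤ (ts.map rho).sum :=
    List.single_le_sum (by simpa using fun t _ => (rho_pos t).le) _ (List.mem_map_of_mem hc)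
  rw [rho_node]
  linarith [half_le_rootWeight l]

lemma rho_node_of_perm (l : Fin (m + 1)) {ts rest : List (CTree m)} {x y : CTree m}
    (h : ts.Perm (x :: y :: rest)) :
    rho (node l ts) = rootWeight l + rho x + rho y + (rest.map rho).sum := by
  rw [rho_node, (h.map rho).sum_eq]
  simp only [List.map_cons, List.sum_cons]
  ring

lemma dbl_node_nil (l : Fin (m + 1)) : dbl (node l [] : CTree m) = 1 := by
  rw [dbl]

lemma dbl_node_of_ne_nil (l : Fin (m + 1)) {ts : List (CTree m)} (hts : ts ≠ []) :
    dbl (node l ts) =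
      let M := (ts.map dbl).foldr max 0
      if 2 ≤ (ts.map dbl).count M then M + 1 else M := by
  obtain ⟨a, t, rfl⟩ := List.exists_cons_of_ne_nil hts
  rw [dbl, List.attach_map_val]
  simp

lemma dbl_node_cases (l : Fin (m + 1)) {ts : List (CTree m)} (hts : ts ≠ []) :
    (∃ c ∈ ts, dbl (node l ts) = dbl c) ∨
      ∃ x y rest, ts.Perm (x :: y :: rest) ∧ dbl (node l ts) = dbl x + 1 ∧ dbl y = dbl x := by
  obtain ⟨c, hc, hcM⟩ := List.mem_map.1 (List.foldr_max_zero_mem (l := ts.map dbl) (by simpa))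
  rw [dbl_node_of_ne_nil l hts, ← hcM]
  dsimp only
  split_ifs with hcount
  · right
    obtain ⟨l', hl', hmap⟩ := List.sublist_map_iff.1
      (List.duplicate_iff_sublist.1 (List.duplicate_iff_two_le_count.2 hcount))
    obtain ⟨x, y, rfl⟩ := List.length_eq_two.1 (by simpa using congrArg List.length hmap.symm)
    simp only [List.map_cons, List.map_nil, List.cons.injEq, and_true] at hmap
    obtain ⟨rest, hperm⟩ := hl'.exists_perm_append
    exact ⟨x, y, rest, hperm, by rw [hmap.1], hmap.2.symm.trans hmap.1⟩
  · exact Or.inl ⟨c, hc, rfl⟩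

lemma dbl_node_of_perm_pair (l : Fin (m + 1)) {ts : List (CTree m)} {σ₁ σ₂ : CTree m} {d : ℕ}
    (h : ts.Perm [σ₁, σ₂]) (h₁ : dbl σ₁ = d) (h₂ : dbl σ₂ = d) : dbl (node l ts) = d + 1 := by
  have hmap : ts.map dbl = [d, d] := by
    have := List.perm_replicate.1 (show (ts.map dbl).Perm (List.replicate 2 d) by
      simpa [h₁, h₂, List.replicate] using h.map dbl)
    simpa [List.replicate] using this
  rw [dbl_node_of_ne_nil l (by rintro rfl; simp at hmap), hmap]
  simp

theorem two_pow_dbl_le_two_mul_rho_add_one (τ : CTree m) : (2 : ℚ) ^ dbl τ ≤ 2 * rho τ + 1 := by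
  induction τ using CTree.induction with
  | node l ts ih =>
    rcases eq_or_ne ts [] with rfl | hts
    · rw [dbl_node_nil]
      linarith [half_le_rho (node l [])]
    rcases dbl_node_cases l hts with ⟨c, hc, hdc⟩ | ⟨x, y, rest, hperm, hdx, hdy⟩
    · rw [hdc]
      linarith [ih c hc, rho_add_half_le_rho_node l hc]
    · have hx := ih x (hperm.mem_iff.2 (by simp))
      have hy := ih y (hperm.mem_iff.2 (by simp))
      rw [hdy] at hy
      rw [hdx, pow_succ, rho_node_of_perm l hperm]
      linarith [half_le_rootWeight l, sum_map_rho_nonneg rest]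

def IsTight (τ : CTree m) : Prop := 2 * rho τ + 1 = 2 ^ dbl τ

theorem isTight_and_dbl_eq_add_two_iff {τ : CTree m} {k : ℕ} :
    (IsTight τ ∧ dbl τ = k + 2) ↔
      ∃ (l : Fin (m + 1)) (σ₁ σ₂ : CTree m) (ts : List (CTree m)), 1 ≤ (l : ℕ) ∧
        (IsTight σ₁ ∧ dbl σ₁ = k + 1) ∧ (IsTight σ₂ ∧ dbl σ₂ = k + 1) ∧
        ts.Perm [σ₁, σ₂] ∧ τ = node l ts := by
  constructor
  · rintro ⟨htight, hdbl⟩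
    obtain ⟨l, ts⟩ := τ
    rcases eq_or_ne ts [] with rfl | hts
    · rw [dbl_node_nil] at hdbl
      omega
    rcases dbl_node_cases l hts with ⟨c, hc, hdc⟩ | ⟨x, y, rest, hperm, hdx, hdy⟩
    · have hlow := two_pow_dbl_le_two_mul_rho_add_one c
      rw [IsTight, hdc] at htight
      linarith [rho_add_half_le_rho_node l hc]
    · have hx := two_pow_dbl_le_two_mul_rho_add_one x
      have hy := two_pow_dbl_le_two_mul_rho_add_one y
      have hdx' : dbl x = k + 1 := by omega
      have hdy' : dbl y = k + 1 := by omega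
      rw [hdx'] at hx
      rw [hdy'] at hy
      rw [IsTight, hdbl, rho_node_of_perm l hperm, pow_succ] at htight
      have hw := half_le_rootWeight l
      -- tightness forces every slack term to vanish: root weight, extra children, `x` and `y`
      obtain rfl : rest = [] := by
        by_contra hrest
        linarith [sum_map_rho_pos hrest]
      simp only [List.map_nil, List.sum_nil, add_zero] at htight
      refine ⟨l, x, y, ts, rootWeight_eq_half_iff.1 (by linarith),
        ⟨?_, hdx'⟩, ⟨?_, hdy'⟩, hperm, rfl⟩
      · rw [IsTight, hdx']
        linarith
      · rw [IsTight, hdy']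
        linarith
  · rintro ⟨l, σ₁, σ₂, ts, hl, ⟨h₁, hd₁⟩, ⟨h₂, hd₂⟩, hperm, rfl⟩
    have hdbl := dbl_node_of_perm_pair l hperm hd₁ hd₂
    refine ⟨?_, hdbl⟩
    rw [IsTight, hdbl, rho_node_of_perm l (rest := []) hperm, rootWeight_eq_half_iff.2 hl]
    rw [IsTight, hd₁] at h₁
    rw [IsTight, hd₂] at h₂
    simp only [List.map_nil, List.sum_nil]
    linear_combination h₁ + h₂

def perfectTree (l : Fin (m + 1)) : ℕ → CTree m
  | 0 => node l []
  | k + 1 => node l [perfectTree l k, perfectTree l k]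

lemma dbl_perfectTree (l : Fin (m + 1)) (k : ℕ) : dbl (perfectTree l k) = k + 1 := by
  induction k with
  | zero => exact dbl_node_nil l
  | succ k ih => exact dbl_node_of_perm_pair l (List.Perm.refl _) ih ih

lemma isTight_perfectTree {l : Fin (m + 1)} (hl : 1 ≤ (l : ℕ)) (k : ℕ) :
    IsTight (perfectTree l k) := by
  induction k with
  | zero =>
    rw [IsTight, perfectTree, dbl_node_nil, rho_node, rootWeight_eq_half_iff.2 hl]
    norm_num
  | succ k ih =>
    rw [IsTight, dbl_perfectTree] at ih ⊢
    rw [perfectTree, rho_node_of_perm l (rest := []) (List.Perm.refl _),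
      rootWeight_eq_half_iff.2 hl, pow_succ, ← ih]
    simp only [List.map_nil, List.sum_nil]
    ring

lemma exists_isTight_dbl_eq (hm : 1 ≤ m) (k : ℕ) :
    ∃ τ : CTree m, IsTight τ ∧ dbl τ = k + 1 :=
  ⟨perfectTree (Fin.last m) k, isTight_perfectTree hm k, dbl_perfectTree _ k⟩

def IsRhoMinimal (k : ℕ) (τ : CTree m) : Prop :=
  dbl τ = k ∧ ∀ σ : CTree m, dbl σ = k → rho τ ≤ rho σ

lemma isRhoMinimal_add_one_iff (hm : 1 ≤ m) {k : ℕ} {τ : CTree m} :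
    IsRhoMinimal (k + 1) τ ↔ IsTight τ ∧ dbl τ = k + 1 := by
  obtain ⟨τ₀, htight₀, hdbl₀⟩ := exists_isTight_dbl_eq hm k
  constructor
  · rintro ⟨hdbl, hmin⟩
    refine ⟨?_, hdbl⟩
    have hlow := two_pow_dbl_le_two_mul_rho_add_one τ
    rw [IsTight, hdbl₀] at htight₀
    rw [hdbl] at hlow
    rw [IsTight, hdbl]
    linarith [hmin τ₀ hdbl₀]
  · rintro ⟨htight, hdbl⟩
    refine ⟨hdbl, fun σ hσ => ?_⟩
    have hlow := two_pow_dbl_le_two_mul_rho_add_one σ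
    rw [IsTight, hdbl] at htight
    rw [hσ] at hlow
    linarith

theorem isLeast_rho (hm : 1 ≤ m) (k : ℕ) :
    IsLeast {r : ℚ | ∃ τ : CTree m, dbl τ = k + 1 ∧ rho τ = r} (2 ^ k - 1/2) := by
  obtain ⟨τ₀, htight₀, hdbl₀⟩ := exists_isTight_dbl_eq hm k
  refine ⟨⟨τ₀, hdbl₀, ?_⟩, ?_⟩
  · rw [IsTight, hdbl₀, pow_succ] at htight₀
    linarith
  · rintro r ⟨τ, hdbl, rfl⟩
    have hlow := two_pow_dbl_le_two_mul_rho_add_one τ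
    rw [hdbl, pow_succ] at hlow
    linarith

end CTree

open CTree in
theorem stmt8 (m k : ℕ) (hm : 1 ≤ m) (hk : 2 ≤ k) :
    ({τ : CTree m | dbl τ = k ∧ ∀ σ : CTree m, dbl σ = k → rho τ ≤ rho σ}
       = {τ : CTree m | ∃ (l : Fin (m+1)) (σ₁ σ₂ : CTree m) (ts : List (CTree m)),
            1 ≤ (l : ℕ) ∧
            (dbl σ₁ = k - 1 ∧ ∀ σ' : CTree m, dbl σ' = k - 1 → rho σ₁ ≤ rho σ') ∧
            (dbl σ₂ = k - 1 ∧ ∀ σ' : CTree m, dbl σ' = k - 1 → rho σ₂ ≤ rho σ') ∧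
            ts.Perm [σ₁, σ₂] ∧ τ = .node l ts})
    ∧ IsLeast {r : ℚ | ∃ τ : CTree m, dbl τ = k ∧ rho τ = r} ((2 : ℚ) ^ (k - 1) - 1/2)
    ∧ (2 : ℚ) ^ (k - 1) - 1/2 = 2 * ((2 : ℚ) ^ (k - 2) - 1/2) + 1/2 := by
  obtain ⟨k, rfl⟩ : ∃ j, k = j + 2 := ⟨k - 2, by omega⟩
  rw [show k + 2 - 1 = k + 1 by omega, show k + 2 - 2 = k by omega]
  refine ⟨?_, isLeast_rho hm (k + 1), by ring⟩
  ext τ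
  change IsRhoMinimal (k + 2) τ ↔ ∃ (l : Fin (m + 1)) (σ₁ σ₂ : CTree m) (ts : List (CTree m)),
    1 ≤ (l : ℕ) ∧ IsRhoMinimal (k + 1) σ₁ ∧ IsRhoMinimal (k + 1) σ₂ ∧
      ts.Perm [σ₁, σ₂] ∧ τ = node l ts
  simp only [isRhoMinimal_add_one_iff hm]
  exact isTight_and_dbl_eq_add_two_iff
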